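/- Let G be a finite connected graph with set of blocks 𝓑. The graph of the polytope CBP(G) (vertices of CBP(G), adjacent when they form a polyhedral edge) has diameter at most |𝓑| = dim CBP(G): for every two vertices of CBP(G) there is a path between them along edges of the polytope traversing at most |𝓑| edges. -/

import Mathlib

/-!
A set of blocks induces a connected subgraph iff it is connected in the intersection graph of
the blocks. Given two such sets `𝓐 ≠ 𝓐'`, a single block of `𝓐 ∆ 𝓐'` can always be added to or
removed from `𝓐` keeping it connected: if `𝓐' ⊆ 𝓐`, remove a block of `𝓐 \ 𝓐'` farthest from a
fixed block of `𝓐'`; if `𝓐` meets `𝓐'`, add a block of `𝓐' \ 𝓐` touching `𝓐`; if they are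
disjoint, remove any non-cut block of `𝓐` (or add one when `𝓐 = ∅`). On the other hand, two
incidence vectors that differ in one coordinate span an edge of any `0/1`-polytope of which they
are vertices, exposed by the linear functional `∑_{B ∈ 𝓒} x_B - ∑_{B ∉ 𝓒 ∪ {b}} x_B`. Hence
`|𝓐 ∆ 𝓐'| ≤ |𝓑|` flips join `χ^𝓐` to `χ^𝓐'`.
-/

open Set

noncomputable section

namespace ConnectedBlocksPaper

variable {V : Type} [Fintype V] [DecidableEq V]

/-- A subgraph is 2-connected: at least 3 vertices and removing any vertex keeps it connected. -/
def IsTwoConnectedSub (G : SimpleGraph V) (H : G.Subgraph) : Prop :=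
  3 ≤ H.verts.ncard ∧ ∀ v ∈ H.verts, (H.deleteVerts {v}).Connected

/-- A block of `G`: a maximal 2-connected subgraph, or a bridge together with its two
incident vertices. -/
def IsBlock (G : SimpleGraph V) (B : G.Subgraph) : Prop :=
  (IsTwoConnectedSub G B ∧ ∀ B' : G.Subgraph, IsTwoConnectedSub G B' → B ≤ B' → B' = B)
  ∨ (∃ (u v : V) (h : G.Adj u v), G.IsBridge s(u, v) ∧ B = G.subgraphOfAdj h)

/-- The set `𝓑` of blocks of `G`, as a type. -/
abbrev Block (G : SimpleGraph V) := {B : G.Subgraph // IsBlock G B}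

/-- The subgraph `G[𝓐]` induced by a set of blocks. -/
def blockUnion (G : SimpleGraph V) (𝓐 : Set (Block G)) : G.Subgraph :=
  ⨆ B ∈ 𝓐, (B : G.Subgraph)

/-- `G[𝓐]` is connected (the empty set of blocks counts as connected). -/
def ConnBlocks (G : SimpleGraph V) (𝓐 : Set (Block G)) : Prop :=
  𝓐 = ∅ ∨ (blockUnion G 𝓐).Connected

/-- The incidence vector `χ^𝓐 ∈ {0,1}^𝓑` of a set of blocks `𝓐 ⊆ 𝓑`. -/
def incVec (G : SimpleGraph V) (𝓐 : Set (Block G)) : Block G → ℝ :=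
  Set.indicator 𝓐 1

/-- The connected blocks polytope `CBP(G) ⊆ ℝ^𝓑`. -/
def CBP (G : SimpleGraph V) : Set (Block G → ℝ) :=
  convexHull ℝ {x | ∃ 𝓐 : Set (Block G), ConnBlocks G 𝓐 ∧ x = incVec G 𝓐}

/-- `F` is a face of the convex set `P`. -/
def IsFaceOf {E : Type*} [AddCommGroup E] [Module ℝ E] (P F : Set E) : Prop :=
  F ⊆ P ∧ Convex ℝ F ∧
    ∀ x ∈ P, ∀ y ∈ P, ∀ t : ℝ, 0 < t → t < 1 →
      t • x + (1 - t) • y ∈ F → x ∈ F ∧ y ∈ F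

/-- The dimension of a polytope: the dimension of its affine hull. -/
def polyDim {E : Type*} [AddCommGroup E] [Module ℝ E] (P : Set E) : ℕ :=
  Module.finrank ℝ (affineSpan ℝ P).direction

/-- A facet is a face of dimension `dim P - 1`. -/
def IsFacetOf {E : Type*} [AddCommGroup E] [Module ℝ E] (P F : Set E) : Prop :=
  IsFaceOf P F ∧ polyDim F = polyDim P - 1

/-- `v` is a cut vertex of `G`: deleting `v` from the connected graph `G` leaves more than
one component. -/
def IsCutVertex (G : SimpleGraph V) (v : V) : Prop :=
  ¬ (G.induce ({v}ᶜ : Set V)).Preconnected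

/-- `𝓑⟨𝓐⟩`: the smallest set of blocks inducing a connected subgraph and containing `𝓐`. -/
def blockClosure (G : SimpleGraph V) (𝓐 : Set (Block G)) : Set (Block G) :=
  ⋂₀ {𝓒 : Set (Block G) | 𝓐 ⊆ 𝓒 ∧ ConnBlocks G 𝓒}

/-- An independent set of blocks: no two blocks share a common vertex. -/
def IndepBlocks (G : SimpleGraph V) (𝓘 : Set (Block G)) : Prop :=
  ∀ B₁ ∈ 𝓘, ∀ B₂ ∈ 𝓘, B₁ ≠ B₂ →
    ((B₁ : G.Subgraph).verts ∩ (B₂ : G.Subgraph).verts) = ∅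

/-- `(𝓘, α)` is an independent blocks inequality. -/
def IsIBI (G : SimpleGraph V) (𝓘 : Set (Block G)) (α : Block G → ℤ) : Prop :=
  IndepBlocks G 𝓘 ∧
  (∀ B, B ∉ blockClosure G 𝓘 → α B = 0) ∧
  (∀ B ∈ 𝓘, α B = 1) ∧
  (∀ B ∈ blockClosure G 𝓘 \ 𝓘, α B ≤ 0) ∧
  (∑ᶠ B ∈ blockClosure G 𝓘 \ 𝓘, α B = -((𝓘.ncard : ℤ) - 1)) ∧
  (∀ I ⊆ 𝓘, ∑ᶠ B ∈ blockClosure G I \ 𝓘, α B ≤ -((I.ncard : ℤ) - 1))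

/-- `𝓑[H]`: the set of blocks (of `G`) of the subgraph `H`. -/
def blocksOf (G : SimpleGraph V) (H : G.Subgraph) : Set (Block G) :=
  {B : Block G | (B : G.Subgraph) ≤ H}

/-- `𝒦_v`: the components of `G - v` with `v` (and its incident edges) added back. -/
def Kv (G : SimpleGraph V) (v : V) : Set G.Subgraph :=
  {H | ∃ C : (G.induce ({v}ᶜ : Set V)).ConnectedComponent,
        H = (⊤ : G.Subgraph).induce (Subtype.val '' C.supp ∪ {v})}

/-- A polytope is simple if every vertex lies in exactly `dim P` facets. -/
def IsSimplePolytope {E : Type*} [AddCommGroup E] [Module ℝ E] (P : Set E) : Prop :=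
  ∀ x ∈ P.extremePoints ℝ, {F : Set E | IsFacetOf P F ∧ x ∈ F}.ncard = polyDim P

/-- A simplex: the convex hull of an affinely independent finite set. -/
def IsSimplex {E : Type*} [AddCommGroup E] [Module ℝ E] (F : Set E) : Prop :=
  ∃ s : Finset E, AffineIndependent ℝ ((↑) : s → E) ∧ F = convexHull ℝ (s : Set E)

/-- A polytope is simplicial if every facet is a simplex. -/
def IsSimplicialPolytope {E : Type*} [AddCommGroup E] [Module ℝ E] (P : Set E) : Prop :=
  ∀ F : Set E, IsFacetOf P F → IsSimplex F

/-- The graph of a polytope: extreme points, adjacent when they span a 1-dimensional face. -/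
def polyGraph {E : Type*} [AddCommGroup E] [Module ℝ E] (P : Set E) : SimpleGraph E where
  Adj x y := x ≠ y ∧ x ∈ P.extremePoints ℝ ∧ y ∈ P.extremePoints ℝ ∧
    IsFaceOf P (segment ℝ x y) ∧ polyDim (segment ℝ x y) = 1
  symm := by
    constructor
    rintro x y ⟨hxy, hx, hy, hF, hd⟩
    exact ⟨hxy.symm, hy, hx, by rwa [segment_symm], by rwa [segment_symm]⟩
  loopless := by constructor; rintro x ⟨h, -⟩; exact h rfl

open SimpleGraph
open scoped symmDiff

section InducedPreconnected

variable {α : Type*}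

lemma symmDiff_singleton_of_mem {A : Set α} {b : α} (hb : b ∈ A) : A ∆ {b} = A \ {b} := by
  ext x
  by_cases hx : x = b <;> simp [mem_symmDiff, hx, hb]

lemma symmDiff_singleton_of_notMem {A : Set α} {b : α} (hb : b ∉ A) :
    A ∆ {b} = insert b A := by
  ext x
  by_cases hx : x = b <;> simp [mem_symmDiff, hx, hb]

variable {H : SimpleGraph α}

lemma _root_.SimpleGraph.Reachable.exists_adj_dist_lt {u v : α} (h : H.Reachable u v)
    (hne : u ≠ v) : ∃ w, H.Adj u w ∧ H.dist w v < H.dist u v := by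
  obtain ⟨p, hp⟩ := h.exists_walk_length_eq_dist
  cases p with
  | nil => exact absurd rfl hne
  | cons hadj q =>
    rw [Walk.length_cons] at hp
    exact ⟨_, hadj, by have := dist_le q; omega⟩

lemma preconnected_induce_of_subsingleton {A : Set α} (hA : A.Subsingleton) :
    (H.induce A).Preconnected :=
  haveI := hA.coe_sort
  Preconnected.of_subsingleton

/-- Remove a vertex of `A \ S` at maximal distance from a fixed `s ∈ S`: every other vertex
still reaches `s` along a shortest path, which cannot pass through it. -/
lemma exists_preconnected_induce_diff_singleton_of_mem [Finite α] {A S : Set α} {s : α}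
    (hA : (H.induce A).Preconnected) (hS : (H.induce S).Preconnected) (hSA : S ⊆ A)
    (hs : s ∈ S) (hAS : (A \ S).Nonempty) :
    ∃ v ∈ A \ S, (H.induce (A \ {v})).Preconnected := by
  let s' : A := ⟨s, hSA hs⟩
  obtain ⟨a, haA, haS⟩ := hAS
  obtain ⟨v, hvS, hvmax⟩ := exists_max_image {u : A | u.1 ∉ S}
    (fun u => (H.induce A).dist u s') (toFinite _) ⟨⟨a, haA⟩, haS⟩
  have hSv : S ⊆ A \ {v.1} := fun x hx => ⟨hSA hx, fun h => hvS (h ▸ hx)⟩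
  have reach : ∀ u : A, ∀ huv : u ≠ v,
      (H.induce (A \ {v.1})).Reachable ⟨u, u.2, fun h => huv (Subtype.ext h)⟩ ⟨s, hSv hs⟩ := by
    intro u
    induction hn : (H.induce A).dist u s' using Nat.strong_induction_on generalizing u with
    | _ n ih =>
      intro huv
      by_cases huS : u.1 ∈ S
      · exact (hS ⟨u, huS⟩ ⟨s, hs⟩).map (induceHomOfLE H hSv).toHom
      · obtain ⟨w, hadj, hlt⟩ := (hA u s').exists_adj_dist_lt
          (fun h => huS (congrArg Subtype.val h ▸ hs))
        have hwv : w ≠ v := by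
          rintro rfl
          exact absurd (hvmax u huS) (by omega)
        have hadj' : (H.induce (A \ {v.1})).Adj ⟨u, u.2, fun h => huv (Subtype.ext h)⟩
            ⟨w, w.2, fun h => hwv (Subtype.ext h)⟩ := hadj
        exact hadj'.reachable.trans (ih _ (hn ▸ hlt) w rfl hwv)
  refine ⟨v, ⟨v.2, hvS⟩, fun x y => ?_⟩
  have hx := reach ⟨x, x.2.1⟩ (fun h => x.2.2 (congrArg Subtype.val h))
  have hy := reach ⟨y, y.2.1⟩ (fun h => y.2.2 (congrArg Subtype.val h))
  exact hx.trans hy.symm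

lemma exists_preconnected_induce_diff_singleton [Finite α] {A S : Set α}
    (hA : (H.induce A).Preconnected) (hS : (H.induce S).Preconnected) (hSA : S ⊆ A)
    (hAS : (A \ S).Nonempty) :
    ∃ v ∈ A \ S, (H.induce (A \ {v})).Preconnected := by
  rcases S.eq_empty_or_nonempty with rfl | ⟨s, hs⟩
  · obtain ⟨a, ha, -⟩ := hAS
    by_cases hrest : (A \ {a}).Nonempty
    · obtain ⟨v, hv, hconn⟩ := exists_preconnected_induce_diff_singleton_of_mem hA
        (preconnected_induce_of_subsingleton subsingleton_singleton)
        (singleton_subset_iff.2 ha) rfl hrest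
      exact ⟨v, ⟨hv.1, notMem_empty v⟩, hconn⟩
    · rw [not_nonempty_iff_eq_empty] at hrest
      exact ⟨a, ⟨ha, notMem_empty a⟩,
        preconnected_induce_of_subsingleton (hrest ▸ subsingleton_empty)⟩
  · exact exists_preconnected_induce_diff_singleton_of_mem hA hS hSA hs hAS

/-- Walk inside `A'` from `A ∩ A'` to `A' \ A`: its first step out of `A` gives the vertex. -/
lemma exists_preconnected_induce_insert {A A' : Set α} (hA : (H.induce A).Preconnected)
    (hA' : (H.induce A').Preconnected) (hmeet : (A ∩ A').Nonempty) (hnew : (A' \ A).Nonempty) :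
    ∃ b ∈ A' \ A, (H.induce (insert b A)).Preconnected := by
  obtain ⟨a, haA, haA'⟩ := hmeet
  obtain ⟨t, htA', htA⟩ := hnew
  obtain ⟨p⟩ := hA' ⟨a, haA'⟩ ⟨t, htA'⟩
  obtain ⟨d, -, hfst, hsnd⟩ := p.exists_boundary_dart {x | x.1 ∈ A} haA htA
  have hc : d.fst.1 ∈ A := hfst
  have hcb : H.Adj d.fst d.snd := d.adj
  have hunion := induce_union_connected hA (induce_pair_connected_of_adj hcb).preconnected
    ⟨_, hc, mem_insert _ _⟩
  rw [union_insert, union_singleton, insert_eq_of_mem (mem_insert_of_mem _ hc)] at hunion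
  exact ⟨d.snd, ⟨d.snd.2, hsnd⟩, hunion.preconnected⟩

lemma exists_preconnected_induce_symmDiff_singleton [Finite α] {A A' : Set α}
    (hA : (H.induce A).Preconnected) (hA' : (H.induce A').Preconnected) (hne : A ≠ A') :
    ∃ b ∈ A ∆ A', (H.induce (A ∆ {b})).Preconnected := by
  by_cases hsub : A' ⊆ A
  · obtain ⟨b, hb, hconn⟩ := exists_preconnected_induce_diff_singleton hA hA' hsub
      (sdiff_nonempty.2 fun h => hne (h.antisymm hsub))
    exact ⟨b, Or.inl hb, symmDiff_singleton_of_mem hb.1 ▸ hconn⟩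
  have hnew : (A' \ A).Nonempty := sdiff_nonempty.2 hsub
  rcases (A ∩ A').eq_empty_or_nonempty with hdisj | hmeet
  · rcases A.eq_empty_or_nonempty with rfl | hAne
    · obtain ⟨b, hb⟩ := hnew
      exact ⟨b, Or.inr hb, preconnected_induce_of_subsingleton
        (by rw [symmDiff_singleton_of_notMem (notMem_empty b), insert_empty_eq]
            exact subsingleton_singleton)⟩
    obtain ⟨b, hb, hconn⟩ := exists_preconnected_induce_diff_singleton hA
      (preconnected_induce_of_subsingleton subsingleton_empty) (empty_subset A)
      (by rwa [sdiff_empty])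
    have hbA' : b ∉ A' := fun h => (hdisj ▸ mem_inter hb.1 h : b ∈ (∅ : Set α))
    exact ⟨b, Or.inl ⟨hb.1, hbA'⟩, symmDiff_singleton_of_mem hb.1 ▸ hconn⟩
  · obtain ⟨b, hb, hconn⟩ := exists_preconnected_induce_insert hA hA' hmeet hnew
    exact ⟨b, Or.inr hb, symmDiff_singleton_of_notMem hb.2 ▸ hconn⟩

end InducedPreconnected

section MeetGraph

variable {W ι : Type*} {G : SimpleGraph W}

def meetGraph (f : ι → G.Subgraph) : SimpleGraph ι where
  Adj i j := i ≠ j ∧ ((f i).verts ∩ (f j).verts).Nonempty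
  symm := ⟨fun _ _ h => ⟨h.1.symm, inter_comm (f _).verts _ ▸ h.2⟩⟩
  loopless := ⟨fun _ h => h.1 rfl⟩

variable {f : ι → G.Subgraph} {A : Set ι}

lemma reachable_induce_meetGraph {i j : ι} (hi : i ∈ A) (hj : j ∈ A)
    (hij : ((f i).verts ∩ (f j).verts).Nonempty) :
    ((meetGraph f).induce A).Reachable ⟨i, hi⟩ ⟨j, hj⟩ := by
  by_cases h : i = j
  · subst h; rfl
  · exact Adj.reachable (show (meetGraph f).Adj i j from ⟨h, hij⟩)

lemma exists_walk_le_biSup {i : ι} (hf : (f i).Connected) (hi : i ∈ A) {x y : W}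
    (hx : x ∈ (f i).verts) (hy : y ∈ (f i).verts) :
    ∃ p : G.Walk x y, p.toSubgraph ≤ ⨆ j ∈ A, f j := by
  obtain ⟨p, hp⟩ := ((Subgraph.connected_iff_forall_exists_walk_subgraph _).1 hf).2 hx hy
  exact ⟨p, hp.trans (le_biSup f hi)⟩

lemma exists_walk_le_biSup_of_reachable (hf : ∀ i, (f i).Connected) {a b : A}
    (hab : ((meetGraph f).induce A).Reachable a b) {x y : W} (hx : x ∈ (f a).verts)
    (hy : y ∈ (f b).verts) : ∃ p : G.Walk x y, p.toSubgraph ≤ ⨆ j ∈ A, f j := by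
  obtain ⟨q⟩ := hab
  induction q generalizing x with
  | nil => exact exists_walk_le_biSup (hf _) (Subtype.prop _) hx hy
  | cons hadj _ ih =>
    obtain ⟨z, hza, hzb⟩ := hadj.2
    obtain ⟨p₁, h₁⟩ := exists_walk_le_biSup (hf _) (Subtype.prop _) hx hza
    obtain ⟨p₂, h₂⟩ := ih hzb hy
    exact ⟨p₁.append p₂, by rw [Walk.toSubgraph_append]; exact sup_le h₁ h₂⟩

lemma connected_biSup_iff_preconnected_induce_meetGraph (hf : ∀ i, (f i).Connected)
    (hA : A.Nonempty) :
    (⨆ i ∈ A, f i).Connected ↔ ((meetGraph f).induce A).Preconnected := by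
  constructor
  · intro hU ⟨i, hi⟩ ⟨j, hj⟩
    obtain ⟨x, hx⟩ := (hf i).nonempty
    obtain ⟨y, hy⟩ := (hf j).nonempty
    obtain ⟨p, hp⟩ := ((Subgraph.connected_iff_forall_exists_walk_subgraph _).1 hU).2
      ((le_biSup f hi).1 hx) ((le_biSup f hj).1 hy)
    induction p generalizing i with
    | nil => exact reachable_induce_meetGraph hi hj ⟨_, hx, hy⟩
    | @cons u v w h q ih =>
      obtain ⟨hedge, hq⟩ := sup_le_iff.1 hp
      obtain ⟨k, hk, hadj⟩ : ∃ k ∈ A, (f k).Adj u v := by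
        simpa [Subgraph.iSup_adj] using hedge.2 (by simp)
      exact (reachable_induce_meetGraph hi hk ⟨_, hx, hadj.fst_mem⟩).trans
        (ih k hk hadj.snd_mem hy hq)
  · intro hL
    rw [Subgraph.connected_iff_forall_exists_walk_subgraph]
    obtain ⟨i₀, hi₀⟩ := hA
    refine ⟨⟨_, (le_biSup f hi₀).1 (hf i₀).nonempty.some_mem⟩, fun {x y} hx hy => ?_⟩
    obtain ⟨i, hi, hx⟩ : ∃ i ∈ A, x ∈ (f i).verts := by simpa [Subgraph.verts_iSup] using hx
    obtain ⟨j, hj, hy⟩ : ∃ j ∈ A, y ∈ (f j).verts := by simpa [Subgraph.verts_iSup] using hy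
    exact exists_walk_le_biSup_of_reachable hf (hL ⟨i, hi⟩ ⟨j, hj⟩) hx hy

end MeetGraph

section Blocks

omit [DecidableEq V]

variable {G : SimpleGraph V}

lemma IsTwoConnectedSub.connected {H : G.Subgraph} (h : IsTwoConnectedSub G H) :
    H.Connected := by
  obtain ⟨hcard, hdel⟩ := h
  rw [Subgraph.connected_iff_forall_exists_walk_subgraph]
  refine ⟨nonempty_of_ncard_ne_zero (by omega), fun {a b} ha hb => ?_⟩
  obtain ⟨c, hc, hcab⟩ := exists_mem_notMem_of_ncard_lt_ncard (s := {a, b}) (t := H.verts)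
    (((ncard_insert_le a {b}).trans (by rw [ncard_singleton])).trans_lt (by omega))
  have hdel_verts : ∀ {x}, x ∈ ({a, b} : Set V) → x ∈ H.verts → x ∈ (H.deleteVerts {c}).verts :=
    fun hx hxH => ⟨hxH, fun hxc => hcab (by rwa [← mem_singleton_iff.1 hxc])⟩
  obtain ⟨p, hp⟩ := ((Subgraph.connected_iff_forall_exists_walk_subgraph _).1 (hdel c hc)).2
    (hdel_verts (by simp) ha) (hdel_verts (by simp) hb)
  exact ⟨p, hp.trans Subgraph.deleteVerts_le⟩

lemma IsBlock.connected {B : G.Subgraph} (h : IsBlock G B) : B.Connected := by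
  obtain ⟨h2, -⟩ | ⟨u, v, huv, -, rfl⟩ := h
  · exact h2.connected
  · exact Subgraph.subgraphOfAdj_connected huv

lemma connBlocks_iff_preconnected_induce {𝓐 : Set (Block G)} :
    ConnBlocks G 𝓐 ↔ ((meetGraph (Subtype.val : Block G → G.Subgraph)).induce 𝓐).Preconnected := by
  rcases 𝓐.eq_empty_or_nonempty with rfl | hne
  · exact iff_of_true (Or.inl rfl) (preconnected_induce_of_subsingleton subsingleton_empty)
  · rw [ConnBlocks, or_iff_right hne.ne_empty, blockUnion]
    exact connected_biSup_iff_preconnected_induce_meetGraph (fun B => B.2.connected) hne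

end Blocks

section ExposedFaces

variable {E : Type*} [AddCommGroup E] [Module ℝ E]

lemma mem_convexHull_sep_of_eq {X : Set E} {ℓ : E →ₗ[ℝ] ℝ} {M : ℝ} (hX : ∀ x ∈ X, ℓ x ≤ M)
    {y : E} (hy : y ∈ convexHull ℝ X) (hℓy : ℓ y = M) :
    y ∈ convexHull ℝ {x ∈ X | ℓ x = M} := by
  have hle : ∀ z ∈ convexHull ℝ X, ℓ z ≤ M := convexHull_min hX (convex_halfSpace_le ℓ.isLinear M)
  let D := {z ∈ convexHull ℝ X | ℓ z = M → z ∈ convexHull ℝ {x ∈ X | ℓ x = M}}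
  have hXD : X ⊆ D := fun x hx => ⟨subset_convexHull ℝ X hx, fun h => subset_convexHull ℝ _ ⟨hx, h⟩⟩
  have hD : Convex ℝ D := by
    refine convex_iff_openSegment_subset.2 fun p hp q hq z hz => ?_
    obtain ⟨a, b, ha, hb, hab, rfl⟩ := hz
    refine ⟨convex_convexHull ℝ X hp.1 hq.1 ha.le hb.le hab, fun hz => ?_⟩
    rw [map_add, map_smul, map_smul, smul_eq_mul, smul_eq_mul] at hz
    have hgap : a * (M - ℓ p) + b * (M - ℓ q) = 0 := by linear_combination M * hab - hz
    obtain ⟨hp0, hq0⟩ := (add_eq_zero_iff_of_nonneg (mul_nonneg ha.le (sub_nonneg.2 (hle p hp.1)))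
      (mul_nonneg hb.le (sub_nonneg.2 (hle q hq.1)))).1 hgap
    have hℓp : ℓ p = M := (sub_eq_zero.1 ((mul_eq_zero.1 hp0).resolve_left ha.ne')).symm
    have hℓq : ℓ q = M := (sub_eq_zero.1 ((mul_eq_zero.1 hq0).resolve_left hb.ne')).symm
    exact convex_convexHull ℝ _ (hp.2 hℓp) (hq.2 hℓq) ha.le hb.le hab
  exact (convexHull_min hXD hD hy).2 hℓy

variable [TopologicalSpace E]

lemma isExposed_convexHull_sep {X : Set E} (ℓ : StrongDual ℝ E) {M : ℝ}
    (hX : ∀ x ∈ X, ℓ x ≤ M) : IsExposed ℝ (convexHull ℝ X) (convexHull ℝ {x ∈ X | ℓ x = M}) := by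
  rintro ⟨t, ht⟩
  have hsub : convexHull ℝ {x ∈ X | ℓ x = M} ⊆ convexHull ℝ X := convexHull_mono (sep_subset _ _)
  have hle : ∀ z ∈ convexHull ℝ X, ℓ z ≤ M :=
    convexHull_min hX (convex_halfSpace_le (ℓ : E →ₗ[ℝ] ℝ).isLinear M)
  have heq : ∀ z ∈ convexHull ℝ {x ∈ X | ℓ x = M}, ℓ z = M :=
    convexHull_min (fun x hx => hx.2) (convex_hyperplane (ℓ : E →ₗ[ℝ] ℝ).isLinear M)
  refine ⟨ℓ, ext fun z => ⟨fun hz => ⟨hsub hz, fun y hy => heq z hz ▸ hle y hy⟩, ?_⟩⟩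
  rintro ⟨hz, hmax⟩
  have hℓz : ℓ z = M := (hle z hz).antisymm (heq t ht ▸ hmax t (hsub ht))
  exact mem_convexHull_sep_of_eq (ℓ := (ℓ : E →ₗ[ℝ] ℝ)) hX hz hℓz

lemma IsExposed.isFaceOf {P F : Set E} (hP : Convex ℝ P) (h : IsExposed ℝ P F) :
    IsFaceOf P F := by
  refine ⟨h.subset, h.convex hP, fun x hx y hy t ht0 ht1 hF => ?_⟩
  have hseg : t • x + (1 - t) • y ∈ openSegment ℝ x y :=
    ⟨t, 1 - t, ht0, by linarith, by ring, rfl⟩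
  exact ⟨h.isExtreme.left_mem_of_mem_openSegment hx hy hF hseg,
    h.isExtreme.right_mem_of_mem_openSegment hx hy hF hseg⟩

omit [TopologicalSpace E] in
lemma polyDim_segment {x y : E} (hxy : x ≠ y) : polyDim (segment ℝ x y) = 1 := by
  rw [polyDim, ← convexHull_pair, affineSpan_convexHull, direction_affineSpan, vectorSpan_pair]
  exact finrank_span_singleton (vsub_ne_zero.2 hxy)

lemma polyGraph_adj_of_isExposed_segment {P : Set E} (hP : Convex ℝ P) {x y : E} (hxy : x ≠ y)
    (hx : x ∈ P.extremePoints ℝ) (hy : y ∈ P.extremePoints ℝ)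
    (h : IsExposed ℝ P (segment ℝ x y)) : (polyGraph P).Adj x y :=
  ⟨hxy, hx, hy, IsExposed.isFaceOf hP h, polyDim_segment hxy⟩

end ExposedFaces

section ZeroOnePolytope

variable {ι : Type*}

lemma indicator_interval_term_le (C D E : Set ι) (i : ι) :
    (C.indicator (1 : ι → ℝ) i - Dᶜ.indicator 1 i) * E.indicator 1 i ≤ C.indicator 1 i := by
  by_cases hC : i ∈ C <;> by_cases hD : i ∈ D <;> by_cases hE : i ∈ E <;> simp [*]

variable [Fintype ι]

def intervalFunctional (C D : Set ι) : StrongDual ℝ (ι → ℝ) :=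
  ∑ i, (C.indicator (1 : ι → ℝ) i - Dᶜ.indicator 1 i) • ContinuousLinearMap.proj i

lemma intervalFunctional_indicator (C D E : Set ι) :
    intervalFunctional C D (E.indicator 1) =
      ∑ i, (C.indicator (1 : ι → ℝ) i - Dᶜ.indicator 1 i) * E.indicator 1 i := by
  simp [intervalFunctional]

lemma intervalFunctional_indicator_le (C D E : Set ι) :
    intervalFunctional C D (E.indicator 1) ≤ ∑ i, C.indicator (1 : ι → ℝ) i := by
  rw [intervalFunctional_indicator]
  exact Finset.sum_le_sum fun i _ => indicator_interval_term_le C D E i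

lemma intervalFunctional_indicator_eq_iff (C D E : Set ι) :
    intervalFunctional C D (E.indicator 1) = ∑ i, C.indicator (1 : ι → ℝ) i ↔ C ⊆ E ∧ E ⊆ D := by
  rw [intervalFunctional_indicator,
    Finset.sum_eq_sum_iff_of_le fun i _ => indicator_interval_term_le C D E i]
  refine ⟨fun h => ⟨fun i hC => ?_, fun i hE => ?_⟩, fun ⟨hCE, hED⟩ i _ => ?_⟩
  · by_contra hE
    simpa [hC, hE] using h i (Finset.mem_univ i)
  · by_contra hD
    by_cases hC : i ∈ C <;> simpa [hC, hD, hE] using h i (Finset.mem_univ i)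
  · have hiCE := @hCE i
    have hiED := @hED i
    by_cases hC : i ∈ C <;> by_cases hD : i ∈ D <;> by_cases hE : i ∈ E <;> simp_all

variable (S : Set (Set ι))

lemma isExposed_convexHull_indicator_interval (C D : Set ι) :
    IsExposed ℝ (convexHull ℝ ((·.indicator (1 : ι → ℝ)) '' S))
      (convexHull ℝ ((·.indicator (1 : ι → ℝ)) '' {E ∈ S | C ⊆ E ∧ E ⊆ D})) := by
  have hmax : {x ∈ (·.indicator (1 : ι → ℝ)) '' S |
      intervalFunctional C D x = ∑ i, C.indicator (1 : ι → ℝ) i} =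
      (·.indicator 1) '' {E ∈ S | C ⊆ E ∧ E ⊆ D} := by
    ext x
    constructor
    · rintro ⟨⟨E, hE, rfl⟩, hE'⟩
      exact ⟨E, ⟨hE, (intervalFunctional_indicator_eq_iff C D E).1 hE'⟩, rfl⟩
    · rintro ⟨E, ⟨hE, hint⟩, rfl⟩
      exact ⟨⟨E, hE, rfl⟩, (intervalFunctional_indicator_eq_iff C D E).2 hint⟩
  exact hmax ▸ isExposed_convexHull_sep (intervalFunctional C D)
    (by rintro _ ⟨E, -, rfl⟩; exact intervalFunctional_indicator_le C D E)

variable {S}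

lemma indicator_mem_extremePoints_convexHull {A : Set ι} (hA : A ∈ S) :
    A.indicator 1 ∈ (convexHull ℝ ((·.indicator (1 : ι → ℝ)) '' S)).extremePoints ℝ := by
  have hsingle : {E ∈ S | A ⊆ E ∧ E ⊆ A} = {A} := by
    ext E
    simp only [mem_sep_iff, mem_singleton_iff, ← subset_antisymm_iff (a := A), eq_comm (a := A)]
    exact ⟨fun h => h.2, fun h => ⟨h ▸ hA, h⟩⟩
  have := isExposed_convexHull_indicator_interval S A A
  rw [hsingle, image_singleton, convexHull_singleton] at this
  exact isExtreme_singleton.1 this.isExtreme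

lemma polyGraph_adj_indicator_insert {C : Set ι} {b : ι} (hb : b ∉ C) (hC : C ∈ S)
    (hCb : insert b C ∈ S) :
    (polyGraph (convexHull ℝ ((·.indicator (1 : ι → ℝ)) '' S))).Adj
      (C.indicator 1) ((insert b C).indicator 1) := by
  have hpair : {E ∈ S | C ⊆ E ∧ E ⊆ insert b C} = {C, insert b C} := by
    ext E
    simp only [mem_sep_iff, mem_insert_iff, mem_singleton_iff]
    constructor
    · rintro ⟨-, hCE, hEb⟩
      by_cases hbE : b ∈ E
      · exact Or.inr (hEb.antisymm (insert_subset hbE hCE))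
      · exact Or.inl (((subset_insert_iff_of_notMem hbE).1 hEb).antisymm hCE)
    · rintro (rfl | rfl)
      exacts [⟨hC, subset_rfl, subset_insert b E⟩, ⟨hCb, subset_insert b C, subset_rfl⟩]
  have hexp := isExposed_convexHull_indicator_interval S C (insert b C)
  rw [hpair, image_pair, convexHull_pair] at hexp
  refine polyGraph_adj_of_isExposed_segment (convex_convexHull ℝ _) (fun h => ?_)
    (indicator_mem_extremePoints_convexHull hC) (indicator_mem_extremePoints_convexHull hCb) hexp
  exact hb (indicator_one_inj ℝ h ▸ mem_insert b C)

lemma polyGraph_adj_indicator_symmDiff {A : Set ι} {b : ι} (hA : A ∈ S) (hAb : A ∆ {b} ∈ S) :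
    (polyGraph (convexHull ℝ ((·.indicator (1 : ι → ℝ)) '' S))).Adj
      (A.indicator 1) ((A ∆ {b}).indicator 1) := by
  by_cases hbA : b ∈ A
  · rw [symmDiff_singleton_of_mem hbA] at hAb ⊢
    have hadj := polyGraph_adj_indicator_insert (fun h => h.2 rfl) hAb
      ((insert_sdiff_self_of_mem hbA).symm ▸ hA)
    rw [insert_sdiff_self_of_mem hbA] at hadj
    exact hadj.symm
  · rw [symmDiff_singleton_of_notMem hbA] at hAb ⊢
    exact polyGraph_adj_indicator_insert hbA hA hAb

end ZeroOnePolytope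

section FlipWalk

variable {α β : Type*} [Finite α]

/-- Each flip `A ↦ A ∆ {b}` with `b ∈ A ∆ A'` shrinks `A ∆ A'` by one element. -/
lemma exists_walk_length_le_ncard_symmDiff {S : Set (Set α)} {Γ : SimpleGraph β}
    (f : Set α → β) (hflip : ∀ A ∈ S, ∀ A' ∈ S, A ≠ A' → ∃ b ∈ A ∆ A', A ∆ {b} ∈ S)
    (hadj : ∀ A ∈ S, ∀ b, A ∆ {b} ∈ S → Γ.Adj (f A) (f (A ∆ {b})))
    {A A' : Set α} (hA : A ∈ S) (hA' : A' ∈ S) :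
    ∃ w : Γ.Walk (f A) (f A'), w.length ≤ (A ∆ A').ncard := by
  induction hn : (A ∆ A').ncard using Nat.strong_induction_on generalizing A with
  | _ n ih =>
    by_cases hAA' : A = A'
    · subst hAA'
      exact ⟨Walk.nil, Nat.zero_le _⟩
    obtain ⟨b, hb, hAb⟩ := hflip A hA A' hA' hAA'
    have hsd : A ∆ {b} ∆ A' = A ∆ A' \ {b} := by
      rw [symmDiff_right_comm, symmDiff_singleton_of_mem hb]
    have hlt : (A ∆ {b} ∆ A').ncard < n :=
      hn ▸ hsd ▸ ncard_sdiff_singleton_lt_of_mem hb (toFinite _)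
    obtain ⟨w, hw⟩ := ih _ hlt hAb rfl
    exact ⟨Walk.cons (hadj A hA b hAb) w, by rw [Walk.length_cons]; omega⟩

end FlipWalk

omit [Fintype V] [DecidableEq V] in
lemma CBP_eq_convexHull_indicator (G : SimpleGraph V) :
    CBP G = convexHull ℝ ((·.indicator (1 : Block G → ℝ)) '' {𝓐 | ConnBlocks G 𝓐}) := by
  rw [CBP]
  congr 1
  ext x
  exact ⟨fun ⟨𝓐, h𝓐, hx⟩ => ⟨𝓐, h𝓐, hx.symm⟩, fun ⟨𝓐, h𝓐, hx⟩ => ⟨𝓐, h𝓐, hx.symm⟩⟩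

theorem cbp_diameter_general (G : SimpleGraph V) :
    ∀ x ∈ (CBP G).extremePoints ℝ, ∀ y ∈ (CBP G).extremePoints ℝ,
      ∃ w : (polyGraph (CBP G)).Walk x y, w.length ≤ Nat.card (Block G) := by
  have : Fintype (Block G) := Fintype.ofFinite _
  have hflip : ∀ 𝓐 ∈ {𝓐 | ConnBlocks G 𝓐}, ∀ 𝓐' ∈ {𝓐 | ConnBlocks G 𝓐}, 𝓐 ≠ 𝓐' →
      ∃ B ∈ 𝓐 ∆ 𝓐', 𝓐 ∆ {B} ∈ {𝓐 | ConnBlocks G 𝓐} := by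
    simp_rw [mem_ofPred_eq, connBlocks_iff_preconnected_induce]
    exact fun _ h _ h' hne => exists_preconnected_induce_symmDiff_singleton h h' hne
  rw [CBP_eq_convexHull_indicator]
  intro x hx y hy
  obtain ⟨𝓐, h𝓐, rfl⟩ := extremePoints_convexHull_subset hx
  obtain ⟨𝓐', h𝓐', rfl⟩ := extremePoints_convexHull_subset hy
  obtain ⟨w, hw⟩ := exists_walk_length_le_ncard_symmDiff _ hflip
    (fun _ h _ h' => polyGraph_adj_indicator_symmDiff h h') h𝓐 h𝓐'
  exact ⟨w, hw.trans (ncard_le_card _)⟩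

/-- the graph of `CBP(G)` has diameter at most `|𝓑| = dim CBP(G)`. -/
theorem cbp_diameter (G : SimpleGraph V) (hG : G.Connected) :
    ∀ x ∈ (CBP G).extremePoints ℝ, ∀ y ∈ (CBP G).extremePoints ℝ,
      ∃ w : (polyGraph (CBP G)).Walk x y, w.length ≤ Nat.card (Block G) :=
  cbp_diameter_general G

end ConnectedBlocksPaper
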